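/- arXiv:1105.2325 — 2 statements merged into one kernel-verified Lean document; each statement's English description precedes it below -/
import Mathlib

section
/- Let R be a one-dimensional Cohen-Macaulay local ring with maximal ideal 𝔪 and let I be an 𝔪-primary ideal. Suppose there exist integrally closed ideals J₁, ..., J_{k-1} with 𝔪 ⊋ J_{k-1} ⊇ ... ⊇ J₁ ⊋ Ī (the integral closure of I), all distinct. Then for every n ≥ 1, the length λ(𝔪Iⁿ/I^{n+1}) ≥ k. -/
set_option maxHeartbeats 1000000
set_option synthInstance.maxHeartbeats 1000000

open IsLocalRing

/-- The length of the `R`-module `M`, as the Krull dimension of its submodule lattice. -/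
noncomputable def modLength (R M : Type*) [CommRing R] [AddCommGroup M] [Module R M] :
    WithBot ℕ∞ :=
  Order.krullDim (Submodule R M)

/-- The subquotient `M/N` of two ideals of `R` (interesting when `N ≤ M`). -/
abbrev idealQuot {R : Type*} [CommRing R] (N M : Ideal R) :=
  ↥M ⧸ (Submodule.comap M.subtype N)

/-- `M` has (finite) length `m`. -/
def HasLength (R M : Type*) [CommRing R] [AddCommGroup M] [Module R M] (m : ℕ) : Prop :=
  modLength R M = (m : WithBot ℕ∞)

/-- `I` has Hilbert coefficients `e0, e1` in dimension one:
`λ(R/Iⁿ) = e₀·n - e₁` for all large `n`. -/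
def HasHilbCoeffs1 {R : Type*} [CommRing R] (I : Ideal R) (e0 e1 : ℤ) : Prop :=
  ∃ N : ℕ, ∀ n ≥ N, ∃ m : ℕ, HasLength R (R ⧸ I ^ n) m ∧ (m : ℤ) = e0 * n - e1

/-- `I` has Hilbert coefficients `e 0, e 1, ..., e d` in dimension `d`:
`λ(R/I^(n+1)) = ∑ (-1)^i (e i) C(n+d-i, d-i)` for all large `n`. -/
def HasHilbCoeffs {R : Type*} [CommRing R] (I : Ideal R) (d : ℕ) (e : ℕ → ℤ) : Prop :=
  ∃ N : ℕ, ∀ n ≥ N, ∃ m : ℕ, HasLength R (R ⧸ I ^ (n + 1)) m ∧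
    (m : ℤ) = ∑ i ∈ Finset.range (d + 1), (-1) ^ i * e i * ((n + d - i).choose (d - i))

/-- `r` is integral over the ideal `I`: it satisfies an equation
`r^n + a₁ r^(n-1) + ⋯ + aₙ = 0` with `aᵢ ∈ Iⁱ`. -/
def IsIntegralOverIdeal {R : Type*} [CommRing R] (I : Ideal R) (r : R) : Prop :=
  ∃ n : ℕ, 0 < n ∧ ∃ a : ℕ → R, (∀ i, 1 ≤ i → i ≤ n → a i ∈ I ^ i) ∧
    r ^ n + ∑ i ∈ Finset.Icc 1 n, a i * r ^ (n - i) = 0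

/-- The integral closure `Ī` of an ideal `I`, as a set. -/
def idealIntClosure {R : Type*} [CommRing R] (I : Ideal R) : Set R :=
  {r | IsIntegralOverIdeal I r}

/-- An ideal is integrally closed if it contains every element integral over it. -/
def IsIntClosedIdeal {R : Type*} [CommRing R] (I : Ideal R) : Prop :=
  ∀ r, IsIntegralOverIdeal I r → r ∈ I

/-- `J` is a reduction of `I`. -/
def IsReductionOf {R : Type*} [CommRing R] (J I : Ideal R) : Prop :=
  J ≤ I ∧ ∃ n : ℕ, I ^ (n + 1) = J * I ^ n

/-- `J` is a minimal reduction of `I`. -/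
def IsMinimalReduction {R : Type*} [CommRing R] (J I : Ideal R) : Prop :=
  IsReductionOf J I ∧ ∀ J', IsReductionOf J' I → J' ≤ J → J' = J

/-- The reduction number of `I`: the least `r` such that `I^(r+1) = J·I^r` for some
minimal reduction `J` of `I`. -/
noncomputable def reductionNumber {R : Type*} [CommRing R] (I : Ideal R) : ℕ :=
  sInf {r | ∃ J, IsMinimalReduction J I ∧ I ^ (r + 1) = J * I ^ r}

/-- A Noetherian local ring is Cohen-Macaulay iff some regular sequence contained in the
maximal ideal has length equal to the Krull dimension. -/
def IsCMLocalRing (R : Type*) [CommRing R] [IsLocalRing R] : Prop :=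
  ∃ (n : ℕ) (s : Fin n → R), (∀ i, s i ∈ maximalIdeal R) ∧
    RingTheory.Sequence.IsRegular R (List.ofFn s) ∧ (n : WithBot ℕ∞) = ringKrullDim R

lemma mem_intClosure_self' {R : Type*} [CommRing R] (I : Ideal R) {r : R} (hr : r ∈ I) :
    IsIntegralOverIdeal I r := by
  refine ⟨1, one_pos, fun _ => -r, ?_, ?_⟩
  · intro i h1 h2
    have : i = 1 := le_antisymm h2 h1
    subst this; simpa using I.neg_mem hr
  · simp

lemma detTrick' {R : Type*} [CommRing R] [IsNoetherianRing R] (J M : Ideal R)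
    (r : R) (hr : r ∈ M) (hreg : ∀ a : R, a * r = 0 → a = 0)
    (x : R) (hx : ∀ m ∈ M, x * m ∈ J * M) : IsIntegralOverIdeal J x := by
  cases subsingleton_or_nontrivial R
  · exact ⟨1, one_pos, 0, fun i _ _ => by simp, Subsingleton.elim _ _⟩
  haveI : Module.Finite R ↥M := Module.Finite.iff_fg.mpr (IsNoetherian.noetherian M)
  set f : Module.End R ↥M := algebraMap R (Module.End R ↥M) x with hf
  have hsmul : J * M = Submodule.map M.subtype (J • (⊤ : Submodule R ↥M)) := by
    rw [Submodule.map_smul'', Submodule.map_top, Submodule.range_subtype, smul_eq_mul]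
  have hrange : LinearMap.range f ≤ J • (⊤ : Submodule R ↥M) := by
    rintro y ⟨m, rfl⟩
    have h1 : x * (m : R) ∈ J * M := hx m m.2
    rw [hsmul] at h1
    obtain ⟨w, hw, hw2⟩ := h1
    have : w = f m := by
      apply Subtype.ext
      simpa [hf, Module.algebraMap_end_apply] using hw2
    rwa [← this]
  obtain ⟨p, hmonic, -, hcoeff, haeval⟩ :=
    LinearMap.exists_monic_and_coeff_mem_pow_and_aeval_eq_zero_of_range_le_smul R f J hrange
  have heval : p.eval x = 0 := by
    have h0 : Polynomial.aeval f p = algebraMap R (Module.End R ↥M) (p.eval x) := by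
      rw [hf, Polynomial.aeval_algebraMap_apply]
      simp
    rw [haeval] at h0
    have h1 : (p.eval x) • (⟨r, hr⟩ : ↥M) = 0 := by
      have := congrArg (fun g : Module.End R ↥M => g ⟨r, hr⟩) h0
      simpa [Module.algebraMap_end_apply] using this.symm
    have h2 : p.eval x * r = 0 := by
      have := congrArg (Subtype.val) h1
      simpa using this
    exact hreg _ h2
  set n := p.natDegree with hn
  have hn1 : 1 ≤ n := by
    by_contra h
    have h0 : n = 0 := by omega
    have : p = 1 := (Polynomial.Monic.natDegree_eq_zero hmonic).mp h0
    rw [this] at heval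
    simp at heval
  refine ⟨n, hn1, fun i => p.coeff (n - i), ?_, ?_⟩
  · intro i h1 h2
    have := hcoeff (n - i)
    rwa [Nat.sub_sub_self h2] at this
  · have hsum : ∑ i ∈ Finset.Icc 1 n, p.coeff (n - i) * x ^ (n - i)
        = ∑ i ∈ Finset.range n, p.coeff i * x ^ i := by
      refine Finset.sum_nbij' (fun i => n - i) (fun j => n - j) ?_ ?_ ?_ ?_ ?_
      · intro a ha; simp only [Finset.mem_Icc, Finset.mem_range] at *; omega
      · intro a ha; simp only [Finset.mem_Icc, Finset.mem_range] at *; omega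
      · intro a ha; simp only [Finset.mem_Icc, Finset.mem_range] at *; omega
      · intro a ha; simp only [Finset.mem_Icc, Finset.mem_range] at *; omega
      · intro a ha; rfl
    calc x ^ n + ∑ i ∈ Finset.Icc 1 n, p.coeff (n - i) * x ^ (n - i)
        = p.coeff n * x ^ n + ∑ i ∈ Finset.range n, p.coeff i * x ^ i := by
          rw [hsum, hmonic.coeff_natDegree]; ring
      _ = p.eval x := by rw [Polynomial.eval_eq_sum_range, Finset.sum_range_succ]; ring
      _ = 0 := heval

/-- **Chain bound.** Let `R` be a one-dimensional Cohen-Macaulay Noetherian local ring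
(with infinite residue field) and `I` an `𝔪`-primary ideal.  Given a strictly increasing
chain `Ī = c 0 ⊂ c 1 ⊂ ⋯ ⊂ c k = 𝔪` whose middle terms are integrally closed ideals,
we have `λ(𝔪Iⁿ/I^{n+1}) ≥ k` for every `n ≥ 1`. -/
theorem stmt3 (R : Type*) [CommRing R] [IsLocalRing R] [IsNoetherianRing R]
    [Infinite (ResidueField R)]
    (hdim : ringKrullDim R = 1) (hCM : IsCMLocalRing R)
    (I : Ideal R) (hItop : I ≠ ⊤) (hrad : I.radical = maximalIdeal R)
    (k : ℕ) (hk : 1 ≤ k) (c : ℕ → Set R)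
    (hc0 : c 0 = idealIntClosure I)
    (hck : c k = (maximalIdeal R : Set R))
    (hmid : ∀ i, 0 < i → i < k → ∃ J : Ideal R, c i = ↑J ∧ IsIntClosedIdeal J)
    (hstrict : ∀ i < k, c i ⊂ c (i + 1)) :
    ∀ n : ℕ, 1 ≤ n →
      (k : WithBot ℕ∞) ≤ modLength R (idealQuot (I ^ (n + 1)) (maximalIdeal R * I ^ n)) := by
  intro n hn
  show (k : WithBot ℕ∞) ≤ Order.krullDim (Submodule R
    (↥(maximalIdeal R * I ^ n) ⧸
      (Submodule.comap (maximalIdeal R * I ^ n).subtype (I ^ (n + 1)))))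
  classical
  obtain ⟨d, s, hs_mem, hs_reg, hd⟩ := hCM
  have hd1 : d = 1 := by
    have h := hd.trans hdim
    exact_mod_cast h
  subst hd1
  have hw := hs_reg.toIsWeaklyRegular
  have hofn : List.ofFn s = [s 0] := by simp [List.ofFn_succ]
  rw [hofn, RingTheory.Sequence.isWeaklyRegular_singleton_iff] at hw
  obtain ⟨t, ht⟩ : ∃ t, (s 0) ^ t ∈ I := by
    have : s 0 ∈ I.radical := by rw [hrad]; exact hs_mem 0
    exact this
  set r : R := ((s 0) ^ t) ^ n with hrdef
  have hrI : r ∈ I ^ n := Ideal.pow_mem_pow ht n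
  have hrreg : ∀ a : R, a * r = 0 → a = 0 := by
    intro a ha
    have hreg : IsSMulRegular R r := (hw.pow t).pow n
    apply hreg
    show r • a = r • 0
    simp only [smul_eq_mul, mul_zero]
    rw [mul_comm]; exact ha
  -- chain of subsets
  have hsub : ∀ j, j ≤ k → ∀ i, i ≤ j → c i ⊆ c j := by
    intro j
    induction j with
    | zero => intro _ i hi; interval_cases i; exact subset_rfl
    | succ m ih =>
      intro hmk i hi
      rcases Nat.lt_or_ge i (m + 1) with h | h
      · exact (ih (by omega) i (by omega)).trans (hstrict m (by omega)).subset
      · have : i = m + 1 := by omega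
        subst this; exact subset_rfl
  -- the ideals
  set Jc : ℕ → Ideal R := fun i =>
    if h : 0 < i ∧ i < k then (hmid i h.1 h.2).choose
    else if i = 0 then I else maximalIdeal R with hJc
  have hJc0 : Jc 0 = I := by simp [hJc]
  have hJck : Jc k = maximalIdeal R := by
    simp only [hJc]
    rw [dif_neg (by omega), if_neg (by omega)]
  have hJcmid : ∀ i, 0 < i → i < k → c i = ↑(Jc i) ∧ IsIntClosedIdeal (Jc i) := by
    intro i h1 h2
    have h3 := (hmid i h1 h2).choose_spec
    simp only [hJc]
    rw [dif_pos (⟨h1, h2⟩ : 0 < i ∧ i < k)]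
    exact h3
  have hIc0 : (I : Set R) ⊆ c 0 := by
    rw [hc0]; intro y hy; exact mem_intClosure_self' I hy
  have hup : ∀ i, 0 < i → i ≤ k → c i ⊆ ↑(Jc i) := by
    intro i h1 h2
    rcases eq_or_lt_of_le h2 with h | h
    · subst h; rw [hJck, hck]
    · rw [← (hJcmid i h1 h).1]
  have hlowsub : ∀ i, i ≤ k → (↑(Jc i) : Set R) ⊆ c i := by
    intro i hi
    rcases Nat.eq_zero_or_pos i with h | h
    · subst h; rw [hJc0]; exact hIc0
    · rcases eq_or_lt_of_le hi with h2 | h2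
      · subst h2; rw [hJck, hck]
      · rw [← (hJcmid i h h2).1]
  have hlow : ∀ i, i < k → ∀ y, IsIntegralOverIdeal (Jc i) y → y ∈ c i := by
    intro i hi y hy
    rcases Nat.eq_zero_or_pos i with h | h
    · subst h; rw [hc0]; rw [hJc0] at hy; exact hy
    · obtain ⟨hcic, hclosed⟩ := hJcmid i h hi
      rw [hcic]; exact hclosed y hy
  have hJmono : ∀ i, i < k → Jc i ≤ Jc (i + 1) := by
    intro i hi y hy
    have h1 : (y : R) ∈ c i := hlowsub i (by omega) hy
    have h2 : y ∈ c (i + 1) := (hstrict i hi).subset h1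
    exact hup (i + 1) (by omega) (by omega) h2
  have hIle : ∀ i, i ≤ k → I ≤ Jc i := by
    intro i hi y hy
    rcases Nat.eq_zero_or_pos i with h | h
    · subst h; rw [hJc0]; exact hy
    · exact hup i h hi (hsub i hi 0 (by omega) (hIc0 hy))
  have hJle : ∀ i, i ≤ k → Jc i ≤ maximalIdeal R := by
    intro i hi y hy
    have h2 := hsub k le_rfl i hi (hlowsub i hi hy)
    rwa [hck] at h2
  -- strictness of the ideal chain
  have hNstrict : ∀ i, i < k → Jc i * I ^ n < Jc (i + 1) * I ^ n := by
    intro i hi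
    refine lt_of_le_of_ne (Ideal.mul_mono_left (hJmono i hi)) ?_
    intro heq
    obtain ⟨x, hx1, hx2⟩ := Set.exists_of_ssubset (hstrict i hi)
    have hxJ : x ∈ Jc (i + 1) := hup (i + 1) (by omega) (by omega) hx1
    have hint : IsIntegralOverIdeal (Jc i) x := by
      apply detTrick' (Jc i) (I ^ n) r hrI hrreg
      intro m hm
      have h3 : x * m ∈ Jc (i + 1) * I ^ n := Ideal.mul_mem_mul hxJ hm
      rwa [← heq] at h3
    exact hx2 (hlow i hi x hint)
  have hIN : ∀ i, i ≤ k → I ^ (n + 1) ≤ Jc i * I ^ n := by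
    intro i hi
    rw [pow_succ, mul_comm]
    exact Ideal.mul_mono_left (hIle i hi)
  have hNle : ∀ i, i ≤ k → Jc i * I ^ n ≤ maximalIdeal R * I ^ n := fun i hi =>
    Ideal.mul_mono_left (hJle i hi)
  -- transfer to the subquotient
  set M0 : Ideal R := maximalIdeal R * I ^ n with hM0
  set K : Submodule R ↥M0 := Submodule.comap M0.subtype (I ^ (n + 1)) with hKdef
  set F : Ideal R → Submodule R (↥M0 ⧸ K) :=
    fun A => Submodule.map K.mkQ (Submodule.comap M0.subtype A) with hF
  have hFstrict : ∀ A B : Ideal R, I ^ (n + 1) ≤ A → A < B → B ≤ M0 → F A < F B := by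
    intro A B hIA hAB hBM
    refine lt_of_le_of_ne (Submodule.map_mono (Submodule.comap_mono hAB.le)) ?_
    intro heq
    apply hAB.ne
    refine le_antisymm hAB.le ?_
    intro b hb
    have hbM : b ∈ M0 := hBM hb
    have hmem : K.mkQ ⟨b, hbM⟩ ∈ F B := ⟨⟨b, hbM⟩, hb, rfl⟩
    rw [← heq] at hmem
    obtain ⟨y, hy, hy2⟩ := hmem
    have hk2 : y - ⟨b, hbM⟩ ∈ K := (Submodule.Quotient.eq K).mp hy2
    have hk3 : (y : R) - b ∈ I ^ (n + 1) := hk2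
    have hyA : (y : R) ∈ A := hy
    have : b = (y : R) - ((y : R) - b) := by ring
    rw [this]
    exact A.sub_mem hyA (hIA hk3)
  let p : LTSeries (Submodule R (↥M0 ⧸ K)) :=
    { length := k
      toFun := fun i => F (Jc i * I ^ n)
      step := fun i => by
        have hi : (i : ℕ) < k := i.2
        simp only [Fin.coe_castSucc, Fin.val_succ]
        exact hFstrict _ _ (hIN i (by omega)) (hNstrict i hi) (hNle (i + 1) (by omega)) }
  have hfin := Order.LTSeries.length_le_krullDim p
  exact_mod_cast hfin
end

section
/- Let R = K[[x,y]]/(xy(x-y)) where K is a field, k ≥ 1, and I = (x^{k+1}, y). Then I² = zI where z = y + x^{k+1}; in particular the reduction number of I is 1. -/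
set_option maxHeartbeats 1000000
set_option synthInstance.maxHeartbeats 1000000

open IsLocalRing

/-- The ring `R = K[[x,y]]/(xy(x-y))`. -/
noncomputable abbrev Ring8 (K : Type*) [Field K] :=
  (MvPowerSeries (Fin 2) K) ⧸
    (Ideal.span {(MvPowerSeries.X 0 : MvPowerSeries (Fin 2) K) * (MvPowerSeries.X 1) *
      (MvPowerSeries.X 0 - MvPowerSeries.X 1)})

/-- The class of `x` in `R = K[[x,y]]/(xy(x-y))`. -/
noncomputable def x8 (K : Type*) [Field K] : Ring8 K :=
  Ideal.Quotient.mk _ (MvPowerSeries.X 0 : MvPowerSeries (Fin 2) K)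

/-- The class of `y` in `R = K[[x,y]]/(xy(x-y))`. -/
noncomputable def y8 (K : Type*) [Field K] : Ring8 K :=
  Ideal.Quotient.mk _ (MvPowerSeries.X 1 : MvPowerSeries (Fin 2) K)

/-- The ideal `I = (x^{k+1}, y)` of `R = K[[x,y]]/(xy(x-y))`. -/
noncomputable def Ideal8 (K : Type*) [Field K] (k : ℕ) : Ideal (Ring8 K) :=
  Ideal.span {x8 K ^ (k + 1), y8 K}


namespace Stmt8Aux

variable (K : Type*) [Field K]

/-- Coefficient of `g * (X0*X1*(X0-X1))` vanishes on monomials missing a variable. -/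
lemma coeff_mul_F (g : MvPowerSeries (Fin 2) K) (d : Fin 2 →₀ ℕ)
    (hd : d 0 = 0 ∨ d 1 = 0) :
    MvPowerSeries.coeff (R := K) d (g * ((MvPowerSeries.X 0 : MvPowerSeries (Fin 2) K) *
      (MvPowerSeries.X 1) * (MvPowerSeries.X 0 - MvPowerSeries.X 1))) = 0 := by
  classical
  have hno : ∀ (a b : ℕ), a ≠ 0 → b ≠ 0 →
      ¬ (Finsupp.single (0 : Fin 2) a + Finsupp.single 1 b ≤ d) := by
    intro a b ha hb h
    rcases hd with hd | hd
    · have := (Finsupp.le_def.mp h) 0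
      simp [Finsupp.single_apply, hd] at this
      omega
    · have := (Finsupp.le_def.mp h) 1
      simp [Finsupp.single_apply, hd] at this
      omega
  have e1 : (MvPowerSeries.X 0 ^ 2 * MvPowerSeries.X 1 : MvPowerSeries (Fin 2) K)
      = MvPowerSeries.monomial (R := K) (Finsupp.single 0 2 + Finsupp.single 1 1) 1 := by
    rw [MvPowerSeries.X_pow_eq, MvPowerSeries.X_def, MvPowerSeries.monomial_mul_monomial,
      one_mul]
  have e2 : (MvPowerSeries.X 0 * MvPowerSeries.X 1 ^ 2 : MvPowerSeries (Fin 2) K)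
      = MvPowerSeries.monomial (R := K) (Finsupp.single 0 1 + Finsupp.single 1 2) 1 := by
    rw [MvPowerSeries.X_pow_eq, MvPowerSeries.X_def, MvPowerSeries.monomial_mul_monomial,
      one_mul]
  have hmul : g * ((MvPowerSeries.X 0 : MvPowerSeries (Fin 2) K) *
      (MvPowerSeries.X 1) * (MvPowerSeries.X 0 - MvPowerSeries.X 1))
      = g * (MvPowerSeries.X 0 ^ 2 * MvPowerSeries.X 1)
        - g * (MvPowerSeries.X 0 * MvPowerSeries.X 1 ^ 2) := by ring
  rw [hmul, map_sub, e1, e2, MvPowerSeries.coeff_mul_monomial,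
    MvPowerSeries.coeff_mul_monomial, if_neg (hno 2 1 two_ne_zero one_ne_zero),
    if_neg (hno 1 2 one_ne_zero two_ne_zero), sub_zero]

lemma y_pow_ne (m : ℕ) : (y8 K) ^ m ≠ 0 := by
  classical
  intro h
  unfold y8 at h
  rw [← map_pow, Ideal.Quotient.eq_zero_iff_mem] at h
  obtain ⟨g, hg⟩ := Ideal.mem_span_singleton'.mp h
  have key := congrArg (MvPowerSeries.coeff (R := K) (Finsupp.single (1 : Fin 2) m)) hg
  rw [coeff_mul_F K g _ (Or.inl (by simp)), MvPowerSeries.coeff_X_pow, if_pos rfl] at key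
  exact one_ne_zero key.symm

lemma y_not_mem_span_z (k : ℕ) (hk : 1 ≤ k) :
    y8 K ∉ Ideal.span {y8 K + x8 K ^ (k + 1)} := by
  classical
  intro h
  obtain ⟨r, hr⟩ := Ideal.mem_span_singleton'.mp h
  obtain ⟨p, rfl⟩ := Ideal.Quotient.mk_surjective r
  unfold x8 y8 at hr
  rw [← map_pow, ← map_add, ← map_mul] at hr
  have h0 : (Ideal.Quotient.mk _ ((MvPowerSeries.X 1 : MvPowerSeries (Fin 2) K)
      - p * (MvPowerSeries.X 1 + MvPowerSeries.X 0 ^ (k + 1)))) = (0 : Ring8 K) := by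
    rw [map_sub, hr, sub_self]
  rw [Ideal.Quotient.eq_zero_iff_mem] at h0
  obtain ⟨g, hg⟩ := Ideal.mem_span_singleton'.mp h0
  have expand : (MvPowerSeries.X 1 : MvPowerSeries (Fin 2) K)
      - p * (MvPowerSeries.X 1 + MvPowerSeries.X 0 ^ (k + 1))
      = MvPowerSeries.X 1 - p * MvPowerSeries.X 1 - p * MvPowerSeries.X 0 ^ (k + 1) := by
    ring
  rw [expand] at hg
  have c2 : ∀ d : Fin 2 →₀ ℕ, MvPowerSeries.coeff (R := K) d (p * MvPowerSeries.X 1)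
      = if Finsupp.single (1 : Fin 2) 1 ≤ d then
          MvPowerSeries.coeff (R := K) (d - Finsupp.single 1 1) p else 0 := by
    intro d
    rw [MvPowerSeries.X_def, MvPowerSeries.coeff_mul_monomial]
    split <;> simp
  have c3 : ∀ d : Fin 2 →₀ ℕ, MvPowerSeries.coeff (R := K) d (p * MvPowerSeries.X 0 ^ (k + 1))
      = if Finsupp.single (0 : Fin 2) (k + 1) ≤ d then
          MvPowerSeries.coeff (R := K) (d - Finsupp.single 0 (k + 1)) p else 0 := by
    intro d
    rw [MvPowerSeries.X_pow_eq, MvPowerSeries.coeff_mul_monomial]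
    split <;> simp
  have n1 : ¬ Finsupp.single (0 : Fin 2) (k + 1) ≤ Finsupp.single (1 : Fin 2) 1 := by
    intro hle
    have := Finsupp.le_def.mp hle 0
    simp [Finsupp.single_apply] at this
  have n2 : ¬ Finsupp.single (1 : Fin 2) 1 ≤ Finsupp.single (0 : Fin 2) (k + 1) := by
    intro hle
    have := Finsupp.le_def.mp hle 1
    simp [Finsupp.single_apply] at this
  have n3 : Finsupp.single (0 : Fin 2) (k + 1) ≠ Finsupp.single (1 : Fin 2) 1 := by
    intro e
    have := DFunLike.congr_fun e 1
    simp [Finsupp.single_apply] at this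
  -- coefficient at `single 1 1`
  have key1 := congrArg (MvPowerSeries.coeff (R := K) (Finsupp.single (1 : Fin 2) 1)) hg
  rw [coeff_mul_F K g _ (Or.inl (by simp)), map_sub, map_sub, c2, c3,
    if_pos le_rfl, if_neg n1, MvPowerSeries.coeff_X, if_pos rfl, tsub_self,
    sub_zero] at key1
  -- key1 : 0 = 1 - coeff 0 p
  have hc : MvPowerSeries.coeff (R := K) 0 p = 1 := by linear_combination key1
  -- coefficient at `single 0 (k+1)`
  have key2 := congrArg (MvPowerSeries.coeff (R := K) (Finsupp.single (0 : Fin 2) (k + 1))) hg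
  rw [coeff_mul_F K g _ (Or.inr (by simp)), map_sub, map_sub, c2, c3,
    if_neg n2, if_pos le_rfl, MvPowerSeries.coeff_X, if_neg n3,
    tsub_self (Finsupp.single (0 : Fin 2) (k + 1)), hc] at key2
  -- key2 : 0 = 0 - 0 - 1
  norm_num at key2

lemma F_not_unit : ¬ IsUnit ((MvPowerSeries.X 0 : MvPowerSeries (Fin 2) K) *
    (MvPowerSeries.X 1) * (MvPowerSeries.X 0 - MvPowerSeries.X 1)) := by
  rw [MvPowerSeries.isUnit_iff_constantCoeff]
  simp [map_mul, MvPowerSeries.constantCoeff_X]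

instance : Nontrivial (Ring8 K) :=
  Ideal.Quotient.nontrivial_iff.mpr (by
    rw [Ne, Ideal.span_singleton_eq_top]
    exact F_not_unit K)

instance : IsLocalRing (Ring8 K) :=
  IsLocalRing.of_surjective' (Ideal.Quotient.mk _) Ideal.Quotient.mk_surjective

lemma rel : x8 K * y8 K * (x8 K - y8 K) = 0 := by
  have h : (Ideal.Quotient.mk _ ((MvPowerSeries.X 0 : MvPowerSeries (Fin 2) K) *
      (MvPowerSeries.X 1) * (MvPowerSeries.X 0 - MvPowerSeries.X 1)) : Ring8 K) = 0 :=
    Ideal.Quotient.eq_zero_iff_mem.mpr (Ideal.subset_span rfl)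
  rw [map_mul, map_mul, map_sub] at h
  exact h

lemma unit_one_add_x_pow (k : ℕ) (hk : 1 ≤ k) : IsUnit (1 + x8 K ^ k) := by
  have h : IsUnit ((1 : MvPowerSeries (Fin 2) K) + MvPowerSeries.X 0 ^ k) := by
    rw [MvPowerSeries.isUnit_iff_constantCoeff, map_add, map_one, map_pow,
      MvPowerSeries.constantCoeff_X, zero_pow (by omega), add_zero]
    exact isUnit_one
  have h2 := h.map (Ideal.Quotient.mk (Ideal.span
    {(MvPowerSeries.X 0 : MvPowerSeries (Fin 2) K) * (MvPowerSeries.X 1) *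
      (MvPowerSeries.X 0 - MvPowerSeries.X 1)}))
  rw [map_add, map_one, map_pow] at h2
  exact h2

end Stmt8Aux

/-- For `R = K[[x,y]]/(xy(x-y))`, `k ≥ 1` and `I = (x^{k+1}, y)`:
`I² = zI` where `z = y + x^{k+1}`; in particular the reduction number of `I` is `1`. -/
theorem stmt8 (K : Type*) [Field K] (k : ℕ) (hk : 1 ≤ k) :
    (Ideal8 K k) ^ 2 = Ideal.span {y8 K + x8 K ^ (k + 1)} * Ideal8 K k ∧
      reductionNumber (Ideal8 K k) = 1 := by
  classical
  obtain ⟨m, rfl⟩ : ∃ m, k = m + 1 := ⟨k - 1, by omega⟩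
  have hxI : x8 K ^ (m + 1 + 1) ∈ Ideal8 K (m + 1) := Ideal.subset_span (Set.mem_insert _ _)
  have hyI : y8 K ∈ Ideal8 K (m + 1) := Ideal.subset_span (Set.mem_insert_of_mem _ rfl)
  have hzI : y8 K + x8 K ^ (m + 1 + 1) ∈ Ideal8 K (m + 1) := add_mem hyI hxI
  have hzleI : Ideal.span {y8 K + x8 K ^ (m + 1 + 1)} ≤ Ideal8 K (m + 1) :=
    (Ideal.span_le).mpr (Set.singleton_subset_iff.mpr hzI)
  obtain ⟨u, hu⟩ := Stmt8Aux.unit_one_add_x_pow K (m + 1) hk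
  have hw : (1 + x8 K ^ (m + 1)) * ((u⁻¹ : (Ring8 K)ˣ) : Ring8 K) = 1 := by
    rw [← hu]; exact u.mul_inv
  have hrel := Stmt8Aux.rel K
  -- key identity : y^2 * (1 + x^k) = z * y
  have hkey : y8 K ^ 2 * (1 + x8 K ^ (m + 1)) = (y8 K + x8 K ^ (m + 1 + 1)) * y8 K := by
    linear_combination (-(x8 K ^ m)) * hrel
  have hy2 : y8 K ^ 2 = ((y8 K + x8 K ^ (m + 1 + 1)) * y8 K) * ((u⁻¹ : (Ring8 K)ˣ) : Ring8 K) := by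
    calc y8 K ^ 2 = y8 K ^ 2 * ((1 + x8 K ^ (m + 1)) * ((u⁻¹ : (Ring8 K)ˣ) : Ring8 K)) := by
          rw [hw, mul_one]
    _ = (y8 K ^ 2 * (1 + x8 K ^ (m + 1))) * ((u⁻¹ : (Ring8 K)ˣ) : Ring8 K) := by ring
    _ = ((y8 K + x8 K ^ (m + 1 + 1)) * y8 K) * ((u⁻¹ : (Ring8 K)ˣ) : Ring8 K) := by rw [hkey]
  -- membership of the four generator products in (z)·I
  have hzyJ : (y8 K + x8 K ^ (m + 1 + 1)) * y8 K ∈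
      Ideal.span {y8 K + x8 K ^ (m + 1 + 1)} * Ideal8 K (m + 1) :=
    Ideal.mul_mem_mul (Ideal.subset_span rfl) hyI
  have hzxJ : (y8 K + x8 K ^ (m + 1 + 1)) * x8 K ^ (m + 1 + 1) ∈
      Ideal.span {y8 K + x8 K ^ (m + 1 + 1)} * Ideal8 K (m + 1) :=
    Ideal.mul_mem_mul (Ideal.subset_span rfl) hxI
  have hyyJ : y8 K * y8 K ∈ Ideal.span {y8 K + x8 K ^ (m + 1 + 1)} * Ideal8 K (m + 1) := by
    have he : y8 K * y8 K
        = ((y8 K + x8 K ^ (m + 1 + 1)) * y8 K) * ((u⁻¹ : (Ring8 K)ˣ) : Ring8 K) := by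
      rw [← hy2]; ring
    rw [he]
    exact Ideal.mul_mem_right _ _ hzyJ
  have hxyJ : x8 K ^ (m + 1 + 1) * y8 K ∈
      Ideal.span {y8 K + x8 K ^ (m + 1 + 1)} * Ideal8 K (m + 1) := by
    have he : x8 K ^ (m + 1 + 1) * y8 K
        = (y8 K + x8 K ^ (m + 1 + 1)) * y8 K - y8 K * y8 K := by ring
    rw [he]
    exact sub_mem hzyJ hyyJ
  have hyxJ : y8 K * x8 K ^ (m + 1 + 1) ∈
      Ideal.span {y8 K + x8 K ^ (m + 1 + 1)} * Ideal8 K (m + 1) := by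
    rw [mul_comm (y8 K) (x8 K ^ (m + 1 + 1))]; exact hxyJ
  have hxxJ : x8 K ^ (m + 1 + 1) * x8 K ^ (m + 1 + 1) ∈
      Ideal.span {y8 K + x8 K ^ (m + 1 + 1)} * Ideal8 K (m + 1) := by
    have he : x8 K ^ (m + 1 + 1) * x8 K ^ (m + 1 + 1)
        = (y8 K + x8 K ^ (m + 1 + 1)) * x8 K ^ (m + 1 + 1) - y8 K * x8 K ^ (m + 1 + 1) := by
      ring
    rw [he]
    exact sub_mem hzxJ hyxJ
  -- Part 1 : I² = (z)·I
  have part1 : Ideal8 K (m + 1) ^ 2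
      = Ideal.span {y8 K + x8 K ^ (m + 1 + 1)} * Ideal8 K (m + 1) := by
    apply le_antisymm
    · rw [sq, Ideal8, Ideal.span_mul_span, Ideal.span_le]
      rintro a ha
      simp only [Set.mem_mul, Set.mem_iUnion, Set.mem_singleton_iff, Set.mem_insert_iff,
        exists_prop] at ha
      obtain ⟨p, hp, q, hq, rfl⟩ := ha
      rcases hp with hp | hp <;> rcases hq with hq | hq <;> subst hp <;> subst hq
      · exact hxxJ
      · exact hxyJ
      · exact hyxJ
      · exact hyyJ
    · rw [sq]
      exact Ideal.mul_mono_left hzleI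
  -- (z) is a reduction of I
  have hred : IsReductionOf (Ideal.span {y8 K + x8 K ^ (m + 1 + 1)}) (Ideal8 K (m + 1)) := by
    refine ⟨hzleI, 1, ?_⟩
    rw [pow_one]
    exact part1
  -- (z) is a minimal reduction of I
  have hmin : IsMinimalReduction (Ideal.span {y8 K + x8 K ^ (m + 1 + 1)}) (Ideal8 K (m + 1)) := by
    refine ⟨hred, ?_⟩
    intro J' hJ' hle
    by_cases hzJ' : y8 K + x8 K ^ (m + 1 + 1) ∈ J'
    · exact le_antisymm hle ((Ideal.span_le).mpr (Set.singleton_subset_iff.mpr hzJ'))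
    · exfalso
      obtain ⟨hJ'I, n, hn⟩ := hJ'
      have hJm : J' ≤ maximalIdeal (Ring8 K) * Ideal.span {y8 K + x8 K ^ (m + 1 + 1)} := by
        intro a ha
        obtain ⟨c, hc⟩ := Ideal.mem_span_singleton'.mp (hle ha)
        have hcm : c ∈ maximalIdeal (Ring8 K) := by
          rw [IsLocalRing.mem_maximalIdeal, mem_nonunits_iff]
          intro hcu
          obtain ⟨cu, rfl⟩ := hcu
          apply hzJ'
          have hz' : y8 K + x8 K ^ (m + 1 + 1) = (↑cu⁻¹ : Ring8 K) * a := by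
            rw [← hc, ← mul_assoc, Units.inv_mul, one_mul]
          rw [hz']
          exact Ideal.mul_mem_left _ _ ha
        rw [← hc]
        exact Ideal.mul_mem_mul hcm (Ideal.subset_span rfl)
      have hNle : Ideal8 K (m + 1) ^ (n + 1)
          ≤ maximalIdeal (Ring8 K) * Ideal8 K (m + 1) ^ (n + 1) := by
        calc Ideal8 K (m + 1) ^ (n + 1) = J' * Ideal8 K (m + 1) ^ n := hn
          _ ≤ (maximalIdeal (Ring8 K) * Ideal.span {y8 K + x8 K ^ (m + 1 + 1)})
              * Ideal8 K (m + 1) ^ n := Ideal.mul_mono_left hJm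
          _ = maximalIdeal (Ring8 K)
              * (Ideal.span {y8 K + x8 K ^ (m + 1 + 1)} * Ideal8 K (m + 1) ^ n) :=
            mul_assoc _ _ _
          _ ≤ maximalIdeal (Ring8 K) * Ideal8 K (m + 1) ^ (n + 1) := by
              apply Ideal.mul_mono_right
              calc Ideal.span {y8 K + x8 K ^ (m + 1 + 1)} * Ideal8 K (m + 1) ^ n
                  ≤ Ideal8 K (m + 1) * Ideal8 K (m + 1) ^ n := Ideal.mul_mono_left hzleI
                _ = Ideal8 K (m + 1) ^ (n + 1) := by rw [Ideal.IsTwoSided.pow_succ]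
      have hfg : (Ideal8 K (m + 1) ^ (n + 1)).FG :=
        Submodule.FG.pow (Submodule.fg_span (Set.toFinite _)) (n + 1)
      have hbot : Ideal8 K (m + 1) ^ (n + 1) = ⊥ := by
        apply Submodule.eq_bot_of_le_smul_of_le_jacobson_bot (maximalIdeal (Ring8 K))
          (Ideal8 K (m + 1) ^ (n + 1)) hfg
        · rw [Ideal.smul_eq_mul]
          exact hNle
        · rw [IsLocalRing.jacobson_eq_maximalIdeal (⊥ : Ideal (Ring8 K)) bot_ne_top]
      have hyn : y8 K ^ (n + 1) ∈ Ideal8 K (m + 1) ^ (n + 1) := Ideal.pow_mem_pow hyI (n + 1)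
      rw [hbot, Submodule.mem_bot] at hyn
      exact Stmt8Aux.y_pow_ne K (n + 1) hyn
  -- conclude
  refine ⟨part1, ?_⟩
  have h1 : (1 : ℕ) ∈ {r | ∃ J, IsMinimalReduction J (Ideal8 K (m + 1)) ∧
      Ideal8 K (m + 1) ^ (r + 1) = J * Ideal8 K (m + 1) ^ r} := by
    refine ⟨Ideal.span {y8 K + x8 K ^ (m + 1 + 1)}, hmin, ?_⟩
    rw [(pow_one _ : Ideal8 K (m + 1) ^ 1 = _)]
    exact part1
  have h0 : (0 : ℕ) ∉ {r | ∃ J, IsMinimalReduction J (Ideal8 K (m + 1)) ∧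
      Ideal8 K (m + 1) ^ (r + 1) = J * Ideal8 K (m + 1) ^ r} := by
    rintro ⟨J₀, hJ₀min, hJ₀eq⟩
    rw [zero_add, (pow_one _ : Ideal8 K (m + 1) ^ 1 = _), (pow_zero _ : Ideal8 K (m + 1) ^ 0 = _), mul_one] at hJ₀eq
    have h2 : Ideal.span {y8 K + x8 K ^ (m + 1 + 1)} = J₀ :=
      hJ₀min.2 (Ideal.span {y8 K + x8 K ^ (m + 1 + 1)}) hred
        (le_trans hzleI (le_of_eq hJ₀eq))
    apply Stmt8Aux.y_not_mem_span_z K (m + 1) hk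
    rw [h2]
    exact hJ₀eq ▸ hyI
  have hne : {r | ∃ J, IsMinimalReduction J (Ideal8 K (m + 1)) ∧
      Ideal8 K (m + 1) ^ (r + 1) = J * Ideal8 K (m + 1) ^ r}.Nonempty := ⟨1, h1⟩
  have hmem := Nat.sInf_mem hne
  have hle := Nat.sInf_le h1
  rcases Nat.le_one_iff_eq_zero_or_eq_one.mp hle with h | h
  · exact absurd (h ▸ hmem) h0
  · exact h
end
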